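/- Let W₁,…,Wₙ be i.i.d. χ²(1) random variables. There exist universal constants C, C' > 0 such that for all n ≥ C, E[(med(W₁,…,Wₙ))^{-2}] ≤ C'. -/

import Mathlib

open MeasureTheory ProbabilityTheory

/-- Sample median of `n` reals (the `⌊n/2⌋`-th order statistic, 0-indexed). -/
noncomputable def sampleMedian {n : ℕ} (hn : 0 < n) (v : Fin n → ℝ) : ℝ :=
  v (Tuple.sort v ⟨n / 2, Nat.div_lt_self hn one_lt_two⟩)

/-- The chi-squared distribution with one degree of freedom, as the law of `W²`, `W ~ N(0,1)`. -/
noncomputable def chiSq1 : Measure ℝ := (gaussianReal 0 1).map fun x => x ^ 2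

/-!
The median is at most `x` only if at least `n / 2 + 1` of the `Wᵢ` are at most `x`. Since the
standard normal density is bounded by `1 / 2`, `P(Wᵢ ≤ x) ≤ √x`, so a union bound over the
`(n / 2 + 1)`-subsets together with independence gives `P(med ≤ x) ≤ 2ⁿ (√x) ^ (n / 2 + 1)`.
Cutting `med⁻²` into the layers `med⁻² ≥ 2⁸ · 16ʲ`, i.e. `med ≤ 2⁻²ʲ⁻⁴`, the probability of the
`j`-th layer is at most `2⁻⁸ʲ` once `n ≥ 14` (the exponent `(j + 2)(n / 2 + 1)` beats the `n` of
`2ⁿ`), which against the weight `16ʲ⁺³` of that layer leaves a convergent geometric series.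
-/

open Finset
open scoped ENNReal NNReal

namespace Tuple

theorem apply_sort_le_iff {n : ℕ} {α : Type*} [LinearOrder α] (f : Fin n → α) (j : Fin n)
    (a : α) : f (sort f j) ≤ a ↔ (j : ℕ) < #{i | f i ≤ a} := by
  rw [← Function.comp_apply (f := f), ← lt_card_le_iff_apply_le_of_monotone (monotone_sort f)]
  simp only [card_filter, Function.comp_apply,
    Equiv.sum_comp (sort f) fun i => if f i ≤ a then 1 else 0]

end Tuple

lemma gaussianPDFReal_le (μ : ℝ) (v : ℝ≥0) (x : ℝ) :
    gaussianPDFReal μ v x ≤ (√(2 * Real.pi * v))⁻¹ := by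
  rw [gaussianPDFReal]
  refine mul_le_of_le_one_right (by positivity) (Real.exp_le_one_iff.2 ?_)
  exact div_nonpos_of_nonpos_of_nonneg (neg_nonpos.2 (sq_nonneg _)) (by positivity)

lemma gaussianReal_le_mul_volume (μ : ℝ) {v : ℝ≥0} (hv : v ≠ 0) (s : Set ℝ) :
    gaussianReal μ v s ≤ ENNReal.ofReal (√(2 * Real.pi * v))⁻¹ * volume s := by
  rw [gaussianReal_apply μ hv, ← setLIntegral_const]
  exact lintegral_mono fun x => ENNReal.ofReal_le_ofReal (gaussianPDFReal_le μ v x)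

lemma chiSq1_Iic_le {x : ℝ} (hx : 0 ≤ x) : chiSq1 (Set.Iic x) ≤ ENNReal.ofReal √x := by
  have hpre : (fun y : ℝ => y ^ 2) ⁻¹' Set.Iic x = Set.Icc (-√x) √x := by
    ext y
    simp only [Set.mem_preimage, Set.mem_Iic, Set.mem_Icc, ← abs_le, ← Real.sqrt_le_sqrt_iff hx,
      Real.sqrt_sq_eq_abs]
  have hpi : 2 ≤ √(2 * Real.pi) := Real.le_sqrt_of_sq_le (by nlinarith [Real.pi_gt_three])
  rw [chiSq1, Measure.map_apply (by fun_prop) measurableSet_Iic, hpre]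
  refine (gaussianReal_le_mul_volume 0 one_ne_zero _).trans ?_
  rw [Real.volume_Icc, ← ENNReal.ofReal_mul (by positivity), NNReal.coe_one, mul_one]
  refine ENNReal.ofReal_le_ofReal ?_
  calc (√(2 * Real.pi))⁻¹ * (√x - -√x) ≤ 2⁻¹ * (2 * √x) := by
        rw [sub_neg_eq_add, ← two_mul]
        gcongr
    _ = √x := by ring

theorem ProbabilityTheory.iIndepFun.measure_le_card_filter_mem_le {Ω ι β : Type*}
    [MeasurableSpace Ω] [MeasurableSpace β] [Fintype ι] {μ : Measure Ω} {W : ι → Ω → β}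
    (hW : iIndepFun W μ) {S : Set β} [DecidablePred (· ∈ S)] (hS : MeasurableSet S) {p : ℝ≥0∞}
    (hp : ∀ i, μ (W i ⁻¹' S) ≤ p) (k : ℕ) :
    μ {ω | k ≤ #{i | W i ω ∈ S}} ≤ (Fintype.card ι).choose k * p ^ k := by
  have hcover : {ω | k ≤ #{i | W i ω ∈ S}} ⊆ ⋃ s ∈ powersetCard k univ, ⋂ i ∈ s, W i ⁻¹' S := by
    intro ω hω
    obtain ⟨s, hs, hcard⟩ := exists_subset_card_eq hω
    simp only [Set.mem_iUnion, Set.mem_iInter, mem_powersetCard]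
    exact ⟨s, ⟨subset_univ s, hcard⟩, fun i hi => (mem_filter.1 (hs hi)).2⟩
  calc μ {ω | k ≤ #{i | W i ω ∈ S}}
      ≤ ∑ s ∈ powersetCard k univ, μ (⋂ i ∈ s, W i ⁻¹' S) :=
        (measure_mono hcover).trans (measure_biUnion_finset_le _ _)
    _ ≤ ∑ s ∈ powersetCard k univ, p ^ k := by
        refine sum_le_sum fun s hs => ?_
        rw [hW.measure_inter_preimage_eq_mul s fun _ _ => hS, ← (mem_powersetCard.1 hs).2]
        exact prod_le_pow_card _ _ _ fun i _ => hp i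
    _ = (Fintype.card ι).choose k * p ^ k := by
        rw [sum_const, card_powersetCard, card_univ, nsmul_eq_mul]

lemma sampleMedian_le_iff {n : ℕ} (hn : 0 < n) (v : Fin n → ℝ) (x : ℝ) :
    sampleMedian hn v ≤ x ↔ n / 2 < #{i | v i ≤ x} :=
  Tuple.apply_sort_le_iff v _ x

lemma measurable_sampleMedian {n : ℕ} (hn : 0 < n) {Ω : Type*} [MeasurableSpace Ω]
    {W : Fin n → Ω → ℝ} (hW : ∀ i, Measurable (W i)) :
    Measurable fun ω => sampleMedian hn fun i => W i ω := by
  refine measurable_of_Iic fun x => ?_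
  have hcount : Measurable fun ω => #{i | W i ω ≤ x} := by
    simp only [card_filter]
    exact Finset.measurable_sum _ fun i _ =>
      Measurable.ite (measurableSet_le (hW i) measurable_const) measurable_const measurable_const
  simpa only [Set.preimage, Set.mem_Iic, Set.mem_Ioi, sampleMedian_le_iff] using
    hcount (measurableSet_Ioi (a := n / 2))

lemma ENNReal.ofReal_le_add_tsum_ite {a q : ℝ} (ha : 0 < a) (hq : 1 < q) (t : ℝ) :
    ENNReal.ofReal t ≤
      ENNReal.ofReal a +
        ∑' j : ℕ, if a * q ^ j ≤ t then ENNReal.ofReal (a * q ^ (j + 1)) else 0 := by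
  rcases le_or_gt t a with hta | hat
  · exact (ENNReal.ofReal_le_ofReal hta).trans le_self_add
  obtain ⟨j, hjt, htj⟩ := exists_nat_pow_near ((one_le_div ha).2 hat.le) hq
  rw [le_div_iff₀' ha] at hjt
  rw [div_lt_iff₀' ha] at htj
  calc ENNReal.ofReal t ≤ ENNReal.ofReal (a * q ^ (j + 1)) := ENNReal.ofReal_le_ofReal htj.le
    _ = if a * q ^ j ≤ t then ENNReal.ofReal (a * q ^ (j + 1)) else 0 := (if_pos hjt).symm
    _ ≤ _ := (ENNReal.le_tsum j).trans le_add_self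

theorem lintegral_ofReal_le_add_tsum_measure {Ω : Type*} [MeasurableSpace Ω] (μ : Measure Ω)
    {f : Ω → ℝ} (hf : Measurable f) {a q : ℝ} (ha : 0 < a) (hq : 1 < q) :
    ∫⁻ ω, ENNReal.ofReal (f ω) ∂μ ≤ ENNReal.ofReal a * μ Set.univ +
      ∑' j : ℕ, ENNReal.ofReal (a * q ^ (j + 1)) * μ {ω | a * q ^ j ≤ f ω} := by
  have hmeas (j : ℕ) : MeasurableSet {ω | a * q ^ j ≤ f ω} := measurableSet_le measurable_const hf
  calc ∫⁻ ω, ENNReal.ofReal (f ω) ∂μ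
      ≤ ∫⁻ ω, ENNReal.ofReal a +
          ∑' j : ℕ, {ω | a * q ^ j ≤ f ω}.indicator
            (fun _ => ENNReal.ofReal (a * q ^ (j + 1))) ω ∂μ :=
        lintegral_mono fun ω => by
          simpa only [Set.indicator_apply, Set.mem_ofPred_eq] using
            ENNReal.ofReal_le_add_tsum_ite ha hq (f ω)
    _ = _ := by
        rw [lintegral_add_left measurable_const, lintegral_const,
          lintegral_tsum fun j => (measurable_const.indicator (hmeas j)).aemeasurable]
        simp only [lintegral_indicator_const (hmeas _)]

lemma ENNReal.pow_mul_inv_pow_le {a : ℝ≥0∞} (ha : 1 ≤ a) (ha' : a ≠ ∞) {n m d : ℕ}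
    (h : n + d ≤ m) : a ^ n * a⁻¹ ^ m ≤ a⁻¹ ^ d := by
  have ha₀ : a ≠ 0 := (zero_lt_one.trans_le ha).ne'
  calc a ^ n * a⁻¹ ^ m ≤ a ^ n * a⁻¹ ^ (n + d) :=
        mul_le_mul_right (pow_le_pow_right_of_le_one' (ENNReal.inv_le_one.2 ha) h) _
    _ = a⁻¹ ^ d := by
        rw [pow_add, ← mul_assoc, ← mul_pow, ENNReal.mul_inv_cancel ha₀ ha', one_pow, one_mul]

section Median

variable {n : ℕ} {Ω : Type*} [MeasurableSpace Ω] {μ : Measure Ω} {W : Fin n → Ω → ℝ}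

lemma measure_sampleMedian_le (hn : 0 < n) (hind : iIndepFun W μ) (hW : ∀ i, Measurable (W i))
    (hmap : ∀ i, μ.map (W i) = chiSq1) {x : ℝ} (hx : 0 ≤ x) :
    μ {ω | sampleMedian hn (fun i => W i ω) ≤ x} ≤ 2 ^ n * ENNReal.ofReal √x ^ (n / 2 + 1) := by
  have hp (i : Fin n) : μ (W i ⁻¹' Set.Iic x) ≤ ENNReal.ofReal √x := by
    rw [← Measure.map_apply (hW i) measurableSet_Iic, hmap i]
    exact chiSq1_Iic_le hx
  have hchoose : (n.choose (n / 2 + 1) : ℝ≥0∞) ≤ 2 ^ n := by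
    exact_mod_cast Nat.choose_le_two_pow n _
  have hset : {ω | sampleMedian hn (fun i => W i ω) ≤ x} =
      {ω | n / 2 + 1 ≤ #{i | W i ω ∈ Set.Iic x}} := by
    simp only [sampleMedian_le_iff, Nat.lt_iff_add_one_le, Set.mem_Iic]
  rw [hset]
  refine (hind.measure_le_card_filter_mem_le measurableSet_Iic hp _).trans ?_
  rw [Fintype.card_fin]
  gcongr

lemma le_inv_of_sq_le_inv_sq {m y : ℝ} (hy : 0 < y) (h : y ^ 2 ≤ m⁻¹ ^ 2) : m ≤ y⁻¹ := by
  rcases le_or_gt m 0 with hm | hm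
  · exact hm.trans (inv_pos.2 hy).le
  · rw [le_inv_comm₀ hm hy]
    exact (pow_le_pow_iff_left₀ hy.le (inv_pos.2 hm).le two_ne_zero).1 h

lemma measure_le_inv_sampleMedian_sq_le (hn : 0 < n) (hn14 : 14 ≤ n) (hind : iIndepFun W μ)
    (hW : ∀ i, Measurable (W i)) (hmap : ∀ i, μ.map (W i) = chiSq1) (j : ℕ) :
    μ {ω | 2 ^ 8 * (2 ^ 4) ^ j ≤ (sampleMedian hn fun i => W i ω)⁻¹ ^ 2} ≤ 2⁻¹ ^ (8 * j) := by
  have hy : (2 : ℝ) ^ 8 * (2 ^ 4) ^ j = (2 ^ (2 * j + 4)) ^ 2 := by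
    rw [← pow_mul, ← pow_mul, ← pow_add]; ring_nf
  have hsqrt : √((2 ^ (2 * j + 4) : ℝ)⁻¹) = (2 ^ (j + 2))⁻¹ := by
    rw [Real.sqrt_inv, show (2 : ℝ) ^ (2 * j + 4) = (2 ^ (j + 2)) ^ 2 by ring,
      Real.sqrt_sq (by positivity)]
  have hofReal : ENNReal.ofReal (2 ^ (j + 2))⁻¹ = 2⁻¹ ^ (j + 2) := by
    rw [ENNReal.ofReal_inv_of_pos (by positivity), ENNReal.ofReal_pow zero_le_two,
      ENNReal.ofReal_ofNat, ENNReal.inv_pow]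
  calc μ {ω | 2 ^ 8 * (2 ^ 4) ^ j ≤ (sampleMedian hn fun i => W i ω)⁻¹ ^ 2}
      ≤ μ {ω | sampleMedian hn (fun i => W i ω) ≤ (2 ^ (2 * j + 4))⁻¹} :=
        measure_mono fun ω hω => le_inv_of_sq_le_inv_sq (by positivity) (hy ▸ hω)
    _ ≤ 2 ^ n * (2⁻¹ ^ (j + 2)) ^ (n / 2 + 1) := by
        rw [← hofReal, ← hsqrt]
        exact measure_sampleMedian_le hn hind hW hmap (by positivity)
    _ ≤ 2⁻¹ ^ (8 * j) := by
        rw [← pow_mul]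
        refine ENNReal.pow_mul_inv_pow_le one_le_two ENNReal.ofNat_ne_top ?_
        have hk : n < 2 * (n / 2 + 1) := by omega
        have hk8 : 8 * j ≤ j * (n / 2 + 1) := by rw [mul_comm]; gcongr; omega
        nlinarith

lemma lintegral_inv_sampleMedian_sq_le [IsProbabilityMeasure μ] (hn : 0 < n) (hn14 : 14 ≤ n)
    (hind : iIndepFun W μ) (hW : ∀ i, Measurable (W i)) (hmap : ∀ i, μ.map (W i) = chiSq1) :
    ∫⁻ ω, ENNReal.ofReal ((sampleMedian hn fun i => W i ω)⁻¹ ^ 2) ∂μ ≤ 2 ^ 14 := by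
  have hmed := measurable_sampleMedian hn hW
  calc ∫⁻ ω, ENNReal.ofReal ((sampleMedian hn fun i => W i ω)⁻¹ ^ 2) ∂μ
      ≤ ENNReal.ofReal (2 ^ 8) * μ Set.univ +
          ∑' j : ℕ, ENNReal.ofReal (2 ^ 8 * (2 ^ 4) ^ (j + 1)) *
            μ {ω | 2 ^ 8 * (2 ^ 4) ^ j ≤ (sampleMedian hn fun i => W i ω)⁻¹ ^ 2} :=
        lintegral_ofReal_le_add_tsum_measure μ (by fun_prop) (by norm_num) (by norm_num)
    _ ≤ 2 ^ 8 + ∑' j : ℕ, 2 ^ 12 * 2⁻¹ ^ j := by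
        rw [measure_univ, mul_one, ENNReal.ofReal_pow zero_le_two, ENNReal.ofReal_ofNat]
        refine add_le_add le_rfl (ENNReal.tsum_le_tsum fun j => ?_)
        have hweight : (2 : ℝ) ^ 8 * (2 ^ 4) ^ (j + 1) = 2 ^ (12 + 4 * j) := by
          rw [← pow_mul, ← pow_add]; ring_nf
        rw [hweight, ENNReal.ofReal_pow zero_le_two, ENNReal.ofReal_ofNat]
        calc (2 : ℝ≥0∞) ^ (12 + 4 * j) *
              μ {ω | 2 ^ 8 * (2 ^ 4) ^ j ≤ (sampleMedian hn fun i => W i ω)⁻¹ ^ 2}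
            ≤ 2 ^ (12 + 4 * j) * 2⁻¹ ^ (8 * j) := by
              gcongr
              exact measure_le_inv_sampleMedian_sq_le hn hn14 hind hW hmap j
          _ ≤ 2 ^ 12 * 2⁻¹ ^ j := by
              rw [pow_add, mul_assoc]
              gcongr
              exact ENNReal.pow_mul_inv_pow_le one_le_two ENNReal.ofNat_ne_top (by omega)
    _ ≤ 2 ^ 14 := by
        rw [ENNReal.tsum_mul_left, ENNReal.tsum_geometric, ENNReal.one_sub_inv_two, inv_inv]
        norm_num

end Median

/-- There are universal constants `C, C' > 0` such that for all `n ≥ C`,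
if `W₁, …, Wₙ` are i.i.d. `χ²(1)` random variables then
`E[(med(W₁, …, Wₙ))⁻²] ≤ C'`. -/
theorem statement9 :
    ∃ (C : ℕ) (C' : ℝ), 0 < C ∧ 0 < C' ∧ ∀ n : ℕ, C ≤ n → ∀ (hn : 0 < n)
      (Ω : Type) [MeasurableSpace Ω] (μ : Measure Ω) [IsProbabilityMeasure μ]
      (W : Fin n → Ω → ℝ),
      iIndepFun W μ →
      (∀ i, Measurable (W i)) →
      (∀ i, μ.map (W i) = chiSq1) →
      (∫ ω, ((sampleMedian hn fun i => W i ω)⁻¹) ^ 2 ∂μ) ≤ C' := by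
  refine ⟨14, 2 ^ 14, by norm_num, by norm_num, fun n hn14 hn Ω _ μ _ W hind hW hmap => ?_⟩
  have hmed := measurable_sampleMedian hn hW
  rw [integral_eq_lintegral_of_nonneg_ae (ae_of_all _ fun ω => sq_nonneg _)
    (hmed.fun_inv.pow_const 2).aestronglyMeasurable]
  refine ENNReal.toReal_le_of_le_ofReal (by norm_num) ?_
  rw [ENNReal.ofReal_pow zero_le_two, ENNReal.ofReal_ofNat]
  exact lintegral_inv_sampleMedian_sq_le hn hn14 hind hW hmap
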